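/- The von Mises-Fisher mechanism V(ε,μ), with density proportional to exp(ε μᵀx) over the unit sphere S^{K-1}, satisfies εd_L-privacy with respect to the angular distance: for all unit vectors μ, μ' and measurable Z ⊆ S^{K-1}, Pr[V(ε,μ) ∈ Z] ≤ e^{ε d_L(μ,μ')} · Pr[V(ε,μ') ∈ Z], where d_L(μ,μ') = arccos(μᵀμ'). -/

import Mathlib

/-!
For unit vectors `μ, μ', x` the chord-versus-arc bound `‖μ - μ'‖ ≤ ∠(μ, μ')` and Cauchy–Schwarz give
`⟪μ, x⟫ - ⟪μ', x⟫ ≤ ∠(μ, μ')`. Hence the two densities are within a factor `exp (ε ∠(μ, μ'))`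
of each other `σ`-almost everywhere, and this ratio bound passes to the measures of every set.
-/

open MeasureTheory InnerProductGeometry

section UnitVectors

variable {V : Type*} [NormedAddCommGroup V] [InnerProductSpace ℝ V]

lemma arccos_inner_eq_angle_of_norm_eq_one {x y : V} (hx : ‖x‖ = 1) (hy : ‖y‖ = 1) :
    Real.arccos (inner ℝ x y) = angle x y := by
  simp [angle, hx, hy]

lemma norm_sub_le_angle_of_norm_eq_one {x y : V} (hx : ‖x‖ = 1) (hy : ‖y‖ = 1) :
    ‖x - y‖ ≤ angle x y := by
  have hsq : ‖x - y‖ ^ 2 ≤ angle x y ^ 2 := by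
    have hcos := Real.one_sub_sq_div_two_le_cos (x := angle x y)
    rw [sq, norm_sub_sq_eq_norm_sq_add_norm_sq_sub_two_mul_norm_mul_norm_mul_cos_angle, hx, hy]
    linarith
  exact (pow_le_pow_iff_left₀ (norm_nonneg _) (angle_nonneg x y) two_ne_zero).1 hsq

lemma inner_sub_inner_le_angle {μ μ' x : V} (hμ : ‖μ‖ = 1) (hμ' : ‖μ'‖ = 1) (hx : ‖x‖ ≤ 1) :
    inner ℝ μ x - inner ℝ μ' x ≤ angle μ μ' :=
  calc inner ℝ μ x - inner ℝ μ' x = inner ℝ (μ - μ') x := (inner_sub_left _ _ _).symm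
    _ ≤ ‖μ - μ'‖ * ‖x‖ := real_inner_le_norm _ _
    _ ≤ ‖μ - μ'‖ := mul_le_of_le_one_right (norm_nonneg _) hx
    _ ≤ angle μ μ' := norm_sub_le_angle_of_norm_eq_one hμ hμ'

lemma exp_mul_inner_le_exp_mul_angle_mul {ε : ℝ} (hε : 0 ≤ ε) {μ μ' x : V}
    (hμ : ‖μ‖ = 1) (hμ' : ‖μ'‖ = 1) (hx : ‖x‖ ≤ 1) :
    Real.exp (ε * inner ℝ μ x) ≤ Real.exp (ε * angle μ μ') * Real.exp (ε * inner ℝ μ' x) := by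
  rw [← Real.exp_add, Real.exp_le_exp, ← sub_le_iff_le_add, ← mul_sub]
  exact mul_le_mul_of_nonneg_left (inner_sub_inner_le_angle hμ hμ' hx) hε

end UnitVectors

lemma MeasureTheory.Measure.withDensity_le_smul_withDensity {α : Type*} [MeasurableSpace α]
    {σ : Measure α} {f g : α → ENNReal} {c : ENNReal} (hc : c ≠ ⊤) (hfg : f ≤ᵐ[σ] c • g) :
    σ.withDensity f ≤ c • σ.withDensity g :=
  (withDensity_mono hfg).trans (withDensity_smul' c g hc).le

theorem vmf_satisfies_directional_privacy_general {K : ℕ}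
    (ε : ℝ) (hε : 0 < ε)
    (σ : Measure (EuclideanSpace ℝ (Fin K)))
    (hσ : σ {x | ‖x‖ ≠ 1} = 0)
    (C : ℝ) (hC : 0 < C)
    (μ μ' : EuclideanSpace ℝ (Fin K)) (hμ : ‖μ‖ = 1) (hμ' : ‖μ'‖ = 1)
    (Z : Set (EuclideanSpace ℝ (Fin K))) :
    σ.withDensity (fun x => ENNReal.ofReal (C * Real.exp (ε * (inner ℝ μ x : ℝ)))) Z ≤
      ENNReal.ofReal (Real.exp (ε * Real.arccos (inner ℝ μ μ' : ℝ))) *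
        σ.withDensity (fun x => ENNReal.ofReal (C * Real.exp (ε * (inner ℝ μ' x : ℝ)))) Z := by
  rw [arccos_inner_eq_angle_of_norm_eq_one hμ hμ']
  have hunit : ∀ᵐ x ∂σ, ‖x‖ = 1 := ae_iff.2 hσ
  have hdensity : (fun x => ENNReal.ofReal (C * Real.exp (ε * inner ℝ μ x))) ≤ᵐ[σ]
      ENNReal.ofReal (Real.exp (ε * angle μ μ')) •
        fun x => ENNReal.ofReal (C * Real.exp (ε * inner ℝ μ' x)) := by
    filter_upwards [hunit] with x hx
    rw [Pi.smul_apply, smul_eq_mul, ← ENNReal.ofReal_mul (Real.exp_nonneg _), mul_left_comm]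
    exact ENNReal.ofReal_le_ofReal <| mul_le_mul_of_nonneg_left
      (exp_mul_inner_le_exp_mul_angle_mul hε.le hμ hμ' hx.le) hC.le
  exact Measure.withDensity_le_smul_withDensity ENNReal.ofReal_ne_top hdensity Z

/-- The von Mises-Fisher mechanism, with density proportional to
`exp (ε ⟪μ, x⟫)` with respect to a measure `σ` concentrated on the unit sphere,
satisfies εd_L-privacy for the angular distance `d_L(μ,μ') = arccos ⟪μ,μ'⟫`. -/
theorem vmf_satisfies_directional_privacy {K : ℕ}
    (ε : ℝ) (hε : 0 < ε)
    (σ : Measure (EuclideanSpace ℝ (Fin K)))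
    (hσ : σ {x | ‖x‖ ≠ 1} = 0)
    (C : ℝ) (hC : 0 < C)
    (μ μ' : EuclideanSpace ℝ (Fin K)) (hμ : ‖μ‖ = 1) (hμ' : ‖μ'‖ = 1)
    (Z : Set (EuclideanSpace ℝ (Fin K))) (hZ : MeasurableSet Z) :
    σ.withDensity (fun x => ENNReal.ofReal (C * Real.exp (ε * (inner ℝ μ x : ℝ)))) Z ≤
      ENNReal.ofReal (Real.exp (ε * Real.arccos (inner ℝ μ μ' : ℝ))) *
        σ.withDensity (fun x => ENNReal.ofReal (C * Real.exp (ε * (inner ℝ μ' x : ℝ)))) Z :=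
  vmf_satisfies_directional_privacy_general ε hε σ hσ C hC μ μ' hμ hμ' Z
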